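/- arXiv:2508.12464 — 5 statements merged into one kernel-verified Lean document; each statement's English description precedes it below -/
import Mathlib

section
/- For any binary configuration σ ∈ {−1,+1}^N with σ ≠ (1,1,…,1), the epistatic overlap with the all-ones configuration satisfies Q(σ) ≤ (N−K−1)/N, where Q(σ) = (1/N)·∑_{i=0}^{N−1} 1[σ_j = 1 for all i ≤ j ≤ i+K] and indices are taken modulo N. -/
open Finset

/-- Periodic extension of a configuration on `Fin N` to `ℕ` (`σ_{i+N} = σ_i`);
`true` plays the role of `+1` and `false` of `-1`. -/
def ext {N : ℕ} (σ : Fin N → Bool) : ℕ → Bool := fun i =>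
  if h : N = 0 then false
  else σ ⟨i % N, Nat.mod_lt _ (Nat.pos_of_ne_zero h)⟩

/-- Number of sites `i ∈ {0,…,N−1}` such that the (periodic) configurations `σ`
and `τ` agree on the whole window `i, i+1, …, i+K`. -/
def matchCount (N K : ℕ) (σ τ : ℕ → Bool) : ℕ :=
  ((Finset.range N).filter fun i => ∀ j ≤ K, σ (i + j) = τ (i + j)).card

/-- Epistatic overlap `Q(σ,τ)` of two periodic configurations. -/
noncomputable def Qov (N K : ℕ) (σ τ : ℕ → Bool) : ℝ := (matchCount N K σ τ : ℝ) / N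

/-- Epistatic overlap `Q(σ)` of a configuration with the all-ones configuration. -/
noncomputable def Qone (N K : ℕ) (σ : ℕ → Bool) : ℝ := Qov N K σ (fun _ => true)

/-- For any `σ ∈ {−1,+1}^N` with `σ ≠ (1,…,1)`, the epistatic overlap with the
all-ones configuration satisfies `Q(σ) ≤ (N−K−1)/N`. -/
theorem stmt_0 (N K : ℕ) (hK : 1 ≤ K) (hNK : K < N) (σ : Fin N → Bool)
    (hσ : σ ≠ fun _ => true) :
    Qone N K (ext σ) ≤ ((N : ℝ) - K - 1) / N := by
  have hN : 0 < N := lt_of_le_of_lt (Nat.zero_le K) hNK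
  obtain ⟨i₀, hi₀⟩ : ∃ i, σ i = false := by
    by_contra h
    push_neg at h
    exact hσ (funext fun i => by
      cases hσi : σ i with
      | false => exact absurd hσi (h i)
      | true => rfl)
  have key : matchCount N K (ext σ) (fun _ => true) ≤ N - (K + 1) := by
    unfold matchCount
    have hsub : ((Finset.range N).filter fun i => ∀ j ≤ K, ext σ (i + j) = true)
        ⊆ (Finset.range N) \
          ((Finset.range (K + 1)).image fun j => (i₀.val + N - j) % N) := by
      intro i hi
      simp only [Finset.mem_filter] at hi
      rw [Finset.mem_sdiff]
      refine ⟨hi.1, ?_⟩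
      simp only [Finset.mem_image, Finset.mem_range]
      rintro ⟨j, hj, rfl⟩
      have hjK : j ≤ K := Nat.lt_succ_iff.mp hj
      have h2 := hi.2 j hjK
      have hjN : j ≤ N := hjK.trans hNK.le
      have hmod : ((i₀.val + N - j) % N + j) % N = i₀.val := by
        rw [Nat.mod_add_mod, Nat.sub_add_cancel (by omega)]
        simp [Nat.add_mod, Nat.mod_eq_of_lt i₀.isLt]
      rw [_root_.ext] at h2
      simp only [Nat.pos_iff_ne_zero.mp hN, dif_neg, not_false_iff] at h2
      have : σ ⟨((i₀.val + N - j) % N + j) % N, Nat.mod_lt _ hN⟩ = σ i₀ := by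
        congr 1
        exact Fin.ext hmod
      rw [this, hi₀] at h2
      exact Bool.false_ne_true h2
    calc ((Finset.range N).filter fun i => ∀ j ≤ K, ext σ (i + j) = true).card
        ≤ ((Finset.range N) \
            ((Finset.range (K + 1)).image fun j => (i₀.val + N - j) % N)).card :=
          Finset.card_le_card hsub
      _ ≤ N - (K + 1) := by
          rw [Finset.card_sdiff_of_subset]
          · rw [Finset.card_range, Finset.card_image_of_injOn, Finset.card_range]
            have key2 : ∀ u v : ℕ, u ≤ v → v < K + 1 →
                (i₀.val + N - u) % N = (i₀.val + N - v) % N → u = v := by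
              intro u v huv hv h
              have h1 : (i₀.val + N - v) ≤ (i₀.val + N - u) := by omega
              have h2 : N ∣ (i₀.val + N - u) - (i₀.val + N - v) :=
                (Nat.modEq_iff_dvd' h1).mp h.symm
              have h3 : (i₀.val + N - u) - (i₀.val + N - v) = v - u := by omega
              rcases Nat.eq_zero_or_pos (v - u) with h4 | h4
              · omega
              · have := Nat.le_of_dvd (h3 ▸ h4) h2
                omega
            intro a ha b hb hab
            simp only [Finset.mem_coe, Finset.mem_range] at ha hb
            rcases le_total a b with h | h
            · exact key2 a b h hb hab
            · exact (key2 b a h ha hab.symm).symm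
          · intro x hx
            simp only [Finset.mem_image, Finset.mem_range] at hx
            obtain ⟨j, _, rfl⟩ := hx
            exact Finset.mem_range.mpr (Nat.mod_lt _ hN)
  have hle : (matchCount N K (ext σ) (fun _ => true) : ℝ) ≤ (N : ℝ) - K - 1 := by
    have hKN : K + 1 ≤ N := hNK
    calc (matchCount N K (ext σ) (fun _ => true) : ℝ) ≤ ((N - (K + 1) : ℕ) : ℝ) := by
          exact_mod_cast key
      _ = (N : ℝ) - K - 1 := by
          rw [Nat.cast_sub hKN]; push_cast; ring
  unfold Qone Qov
  have hNpos : (0 : ℝ) < N := by exact_mod_cast hN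
  gcongr
end

section
/- For N sufficiently large (so that N^2 · 2^{−K} ≤ 1/2) and any integer 1 ≤ l ≤ N−K−1, the number of configurations σ ∈ {−1,+1}^N with N·Q(σ) = l is at most N·2^{N−(K+l)}. -/
open Finset

/-!
Rotating `σ` so that a maximal run of windows starts at site `0` costs a factor `N` and lands in
the anchored configurations, whose windows do not wrap around. If the window set `W` of an
anchored configuration has `m` maximal runs, the configuration is forced on `l + m (K + 1)` sites:
the `l` window starts, the `K` sites after each run end that its last window still covers, and the
`0` right after those. As `0 ∈ W` and `#W = l`, the set `W` is determined by its `m - 1` inner run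
starts and `m - 1` inner run ends, so there are at most `C(N, m - 1)² ≤ N^(2 (m - 1))` of them. For
`N² ≤ 2^K` the sum over `m` is dominated by a geometric series of ratio `1/2`, which bounds the
number of anchored configurations by `2 · 2^(N - l - K - 1)`.
-/

open Function

lemma card_mul_card_pow_card_le_of_eqOn {α β : Type*} [Fintype α] [DecidableEq α] [Fintype β]
    {s : Finset (α → β)} {G : Finset α} (h : ∀ f ∈ s, ∀ g ∈ s, ∀ a ∈ G, f a = g a) :
    #s * Fintype.card β ^ #G ≤ Fintype.card β ^ Fintype.card α := by
  have hrestrict : #s ≤ #(univ : Finset (↥Gᶜ → β)) := by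
    refine card_le_card_of_injOn (fun f a => f a) (fun _ _ => mem_coe.2 (mem_univ _)) ?_
    intro f hf g hg hfg
    funext a
    by_cases ha : a ∈ G
    · exact h f hf g hg a ha
    · exact congrFun hfg ⟨a, mem_compl.2 ha⟩
  rw [card_univ, Fintype.card_fun, Fintype.card_coe, card_compl] at hrestrict
  calc #s * Fintype.card β ^ #G
      ≤ Fintype.card β ^ (Fintype.card α - #G) * Fintype.card β ^ #G := by gcongr
    _ = Fintype.card β ^ Fintype.card α := by rw [← pow_add, Nat.sub_add_cancel (card_le_univ G)]

lemma Nat.count_comp_add_of_periodic {p : ℕ → Prop} [DecidablePred p] {N : ℕ}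
    (hp : Periodic p N) (c : ℕ) : Nat.count (fun k => p (c + k)) N = Nat.count p N := by
  have h₁ := Nat.count_add p c N
  have h₂ := Nat.count_add p N c
  have h₃ : Nat.count (fun k => p (N + k)) c = Nat.count p c := by
    simp only [add_comm N, show ∀ k, p (k + N) = p k from hp]
  rw [add_comm c N] at h₁
  omega

lemma exists_lt_not_and_succ_of_periodic {p : ℕ → Prop} {N : ℕ} (hp : Periodic p N)
    (hN : 0 < N) {a b : ℕ} (ha : p a) (hb : ¬ p b) : ∃ i < N, ¬ p i ∧ p (i + 1) := by
  have hba : b ≤ a + b * N := le_add_left (Nat.le_mul_of_pos_right b hN)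
  obtain ⟨n, hn, hn'⟩ := Nat.exists_not_and_succ_of_not_zero_of_exists (p := fun k => p (b + k))
    (by simpa using hb) ⟨a + b * N - b, by
      simpa [Nat.add_sub_cancel' hba] using (hp.nat_mul b a).symm ▸ ha⟩
  refine ⟨(b + n) % N, Nat.mod_lt _ hN, by rwa [hp.map_mod_nat], ?_⟩
  rw [← hp.map_mod_nat, Nat.mod_add_mod, hp.map_mod_nat]
  exact hn'

def runEnds (W : Finset ℕ) : Finset ℕ := {e ∈ W | e + 1 ∉ W}

def innerStarts (W : Finset ℕ) : Finset ℕ := {s ∈ W | 0 < s ∧ s - 1 ∉ W}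

def innerEnds (W : Finset ℕ) : Finset ℕ := {e ∈ runEnds W | ∃ w ∈ W, e < w}

section Runs

variable {W W' : Finset ℕ}

lemma innerStarts_subset : innerStarts W ⊆ W := filter_subset _ _

lemma innerEnds_subset : innerEnds W ⊆ W := (filter_subset _ _).trans (filter_subset _ _)

lemma card_runEnds_eq_card_innerEnds_add_one (hW : W.Nonempty) :
    #(runEnds W) = #(innerEnds W) + 1 := by
  have hlast : {e ∈ runEnds W | ¬ ∃ w ∈ W, e < w} = {W.max' hW} := by
    ext e
    simp only [runEnds, mem_filter, mem_singleton, not_exists, not_and, not_lt]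
    constructor
    · rintro ⟨⟨he, -⟩, hmax⟩
      exact le_antisymm (W.le_max' e he) (W.max'_le hW e hmax)
    · rintro rfl
      exact ⟨⟨W.max'_mem hW, fun h => by have := W.le_max' _ h; omega⟩,
        fun w hw => W.le_max' w hw⟩
  rw [← card_filter_add_card_filter_not (s := runEnds W) (fun e => ∃ w ∈ W, e < w), hlast, card_singleton]
  rfl

lemma card_innerStarts_eq_card_innerEnds (h0 : 0 ∈ W) : #(innerStarts W) = #(innerEnds W) := by
  -- `e ↦ e + 1` matches `{e ∈ W | e + 1 ∈ W}` with the non-initial points of runs, so both sides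
  -- equal `#W - #{e ∈ W | e + 1 ∈ W} - 1`.
  have hpred : {s ∈ W | ¬ (0 < s ∧ s - 1 ∉ W)} = insert 0 ({e ∈ W | e + 1 ∈ W}.image (· + 1)) := by
    ext s
    simp only [mem_filter, mem_insert, mem_image, not_and, not_not]
    constructor
    · rintro ⟨hs, hs'⟩
      rcases s with _ | s
      · exact Or.inl rfl
      · exact Or.inr ⟨s, ⟨hs' (by omega), hs⟩, rfl⟩
    · rintro (rfl | ⟨e, ⟨he, he'⟩, rfl⟩)
      · exact ⟨h0, by omega⟩
      · exact ⟨he', fun _ => by simpa using he⟩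
  have hstarts : #(innerStarts W) + #{s ∈ W | ¬ (0 < s ∧ s - 1 ∉ W)} = #W :=
    card_filter_add_card_filter_not _
  have hends : #{e ∈ W | e + 1 ∈ W} + #(runEnds W) = #W := card_filter_add_card_filter_not _
  rw [hpred, card_insert_of_notMem (by simp), card_image_of_injective _ (add_left_injective 1)]
    at hstarts
  have := card_runEnds_eq_card_innerEnds_add_one ⟨0, h0⟩
  omega

lemma mem_of_mem_of_forall_lt_mem_iff (h0' : 0 ∈ W') (hcard : #W ≤ #W')
    (hS : innerStarts W ⊆ innerStarts W') (hE : innerEnds W' ⊆ innerEnds W) {n : ℕ}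
    (hlt : ∀ m < n, m ∈ W ↔ m ∈ W') (hn : n ∈ W) : n ∈ W' := by
  by_contra hn'
  rcases n with _ | n
  · exact hn' h0'
  have hnW : n ∈ W := by
    by_contra h
    exact hn' (mem_filter.1 (hS (mem_filter.2 ⟨hn, n.succ_pos, h⟩))).1
  -- `W'` has a run end at `n` that is not an inner one, so `W'` stops there while `W` goes on.
  have hmax : ∀ w ∈ W', w ≤ n := by
    by_contra! ⟨w, hw, hnw⟩
    have := hE (mem_filter.2 ⟨mem_filter.2 ⟨(hlt n n.lt_succ_self).1 hnW, hn'⟩, w, hw, hnw⟩)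
    exact (mem_filter.1 (mem_filter.1 this).1).2 hn
  have hsub : W' ⊂ W :=
    ⟨fun w hw => (hlt w (Nat.lt_succ_of_le (hmax w hw))).2 hw, fun h => hn' (h hn)⟩
  exact absurd (card_lt_card hsub) (by omega)

lemma eq_of_innerStarts_eq_of_innerEnds_eq (h0 : 0 ∈ W) (h0' : 0 ∈ W') (hcard : #W = #W')
    (hS : innerStarts W = innerStarts W') (hE : innerEnds W = innerEnds W') : W = W' := by
  ext n
  induction n using Nat.strong_induction_on with
  | _ n ih =>
    exact ⟨mem_of_mem_of_forall_lt_mem_iff h0' hcard.le hS.subset hE.symm.subset ih,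
      mem_of_mem_of_forall_lt_mem_iff h0 hcard.ge hS.symm.subset hE.subset
        fun m hm => (ih m hm).symm⟩

end Runs

section Counting

variable {N l : ℕ} {𝒲 : Finset (Finset ℕ)} (h𝒲 : ∀ W ∈ 𝒲, W ⊆ range N ∧ 0 ∈ W ∧ #W = l)
include h𝒲

lemma card_filter_card_innerEnds_eq_le (k : ℕ) :
    #{W ∈ 𝒲 | #(innerEnds W) = k} ≤ N.choose k ^ 2 := by
  calc #{W ∈ 𝒲 | #(innerEnds W) = k}
      ≤ #(powersetCard k (range N) ×ˢ powersetCard k (range N)) := by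
        refine card_le_card_of_injOn (fun W => (innerStarts W, innerEnds W)) ?_ ?_
        · intro W hW
          obtain ⟨hW, hk⟩ := mem_filter.1 hW
          obtain ⟨hWN, h0, -⟩ := h𝒲 W hW
          refine mem_product.2 ⟨mem_powersetCard.2 ⟨innerStarts_subset.trans hWN, ?_⟩,
            mem_powersetCard.2 ⟨innerEnds_subset.trans hWN, hk⟩⟩
          rw [card_innerStarts_eq_card_innerEnds h0, hk]
        · intro W hW W' hW' h
          obtain ⟨hS, hE⟩ := Prod.mk.inj h
          obtain ⟨-, h0, hl⟩ := h𝒲 W (mem_filter.1 hW).1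
          obtain ⟨-, h0', hl'⟩ := h𝒲 W' (mem_filter.1 hW').1
          exact eq_of_innerStarts_eq_of_innerEnds_eq h0 h0' (hl.trans hl'.symm) hS hE
    _ = N.choose k ^ 2 := by rw [card_product, card_powersetCard, card_range, sq]

lemma sum_pow_card_innerEnds_le {r : ℝ} (hr : 0 ≤ r) (hNr : (N : ℝ) ^ 2 * r ≤ 1 / 2) :
    ∑ W ∈ 𝒲, r ^ #(innerEnds W) ≤ 2 := by
  have hmaps : ∀ W ∈ 𝒲, #(innerEnds W) ∈ range (N + 1) := fun W hW => by
    have := card_le_card (innerEnds_subset.trans (h𝒲 W hW).1)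
    rw [card_range] at this
    exact mem_range.2 (by omega)
  calc ∑ W ∈ 𝒲, r ^ #(innerEnds W)
      = ∑ k ∈ range (N + 1), ∑ W ∈ 𝒲 with #(innerEnds W) = k, r ^ #(innerEnds W) :=
        (sum_fiberwise_of_maps_to hmaps _).symm
    _ = ∑ k ∈ range (N + 1), (#{W ∈ 𝒲 | #(innerEnds W) = k} : ℝ) * r ^ k := by
        refine sum_congr rfl fun k _ => ?_
        rw [sum_congr rfl fun W hW => by rw [(mem_filter.1 hW).2], sum_const, nsmul_eq_mul]
    _ ≤ ∑ k ∈ range (N + 1), ((N : ℝ) ^ 2 * r) ^ k := by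
        refine sum_le_sum fun k _ => ?_
        calc (#{W ∈ 𝒲 | #(innerEnds W) = k} : ℝ) * r ^ k
            ≤ ((N.choose k ^ 2 : ℕ) : ℝ) * r ^ k := by
              gcongr
              exact_mod_cast card_filter_card_innerEnds_eq_le h𝒲 k
          _ ≤ ((N : ℝ) ^ k) ^ 2 * r ^ k := by
              push_cast
              gcongr
              exact_mod_cast Nat.choose_le_pow N k
          _ = ((N : ℝ) ^ 2 * r) ^ k := by ring
    _ ≤ 2 := by
        rw [range_eq_Ico]
        refine (geom_sum_Ico_le_of_lt_one (by positivity) (by linarith)).trans ?_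
        rw [pow_zero, div_le_iff₀ (by linarith)]
        linarith

end Counting

def IsWindow (K : ℕ) (x : ℕ → Bool) (i : ℕ) : Prop := ∀ j ≤ K, x (i + j) = true

instance (K : ℕ) (x : ℕ → Bool) : DecidablePred (IsWindow K x) := fun _ => by
  unfold IsWindow; infer_instance

def windows (N K : ℕ) (x : ℕ → Bool) : Finset ℕ := {i ∈ range N | IsWindow K x i}

lemma isWindow_of_mem_windows {N K : ℕ} {x : ℕ → Bool} {i : ℕ} (hi : i ∈ windows N K x) :
    IsWindow K x i :=
  (mem_filter.1 hi).2

lemma matchCount_eq_card_windows (N K : ℕ) (x : ℕ → Bool) :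
    matchCount N K x (fun _ => true) = #(windows N K x) := rfl

lemma card_windows_eq_count (N K : ℕ) (x : ℕ → Bool) :
    #(windows N K x) = Nat.count (IsWindow K x) N :=
  (Nat.count_eq_card_filter_range _ _).symm

section Windows

variable {K : ℕ} {x : ℕ → Bool}

lemma IsWindow.apply_eq_true {i p : ℕ} (h : IsWindow K x i) (hip : i ≤ p) (hpi : p ≤ i + K) :
    x p = true := by
  simpa [Nat.add_sub_cancel' hip] using h (p - i) (by omega)

lemma eq_false_of_not_isWindow_of_isWindow_succ {i : ℕ} (h : ¬ IsWindow K x i)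
    (h' : IsWindow K x (i + 1)) : x i = false := by
  by_contra hi
  refine h fun j hj => ?_
  rcases j with _ | j
  · simpa using hi
  · exact h'.apply_eq_true (by omega) (by omega)

lemma eq_false_of_isWindow_of_not_isWindow_succ {i : ℕ} (h : IsWindow K x i)
    (h' : ¬ IsWindow K x (i + 1)) : x (i + K + 1) = false := by
  by_contra hi
  refine h' fun j hj => ?_
  rcases (show j < K ∨ j = K by omega) with hj | rfl
  · exact h.apply_eq_true (by omega) (by omega)
  · simpa [add_right_comm] using hi

lemma isWindow_comp_add (c : ℕ) :
    IsWindow K (fun k => x (c + k)) = fun i => IsWindow K x (c + i) := by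
  funext i
  simp only [IsWindow, add_assoc]

lemma isWindow_periodic {N : ℕ} (hx : Periodic x N) : Periodic (IsWindow K x) N := by
  intro i
  simp only [IsWindow, add_right_comm i N, show ∀ y, x (y + N) = x y from hx]

end Windows

def forcedSet (K : ℕ) (W : Finset ℕ) : Finset ℕ :=
  W ∪ (runEnds W).biUnion fun e => Icc (e + 1) (e + K + 1)

section ForcedSet

variable {K : ℕ} {x : ℕ → Bool} {W : Finset ℕ}
  (hW : ∀ w ∈ W, IsWindow K x w) (hE : ∀ e ∈ runEnds W, x (e + K + 1) = false)
include hW hE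

lemma notMem_Icc_of_mem_runEnds {e w : ℕ} (he : e ∈ runEnds W) (hw : w ∈ W) :
    w ∉ Icc (e + 1) (e + K + 1) := by
  intro hwe
  rw [mem_Icc] at hwe
  have := (hW w hw).apply_eq_true (p := e + K + 1) (by omega) (by omega)
  rw [hE e he] at this
  exact Bool.false_ne_true this

lemma card_forcedSet : #(forcedSet K W) = #W + #(runEnds W) * (K + 1) := by
  have hdisj : Disjoint W ((runEnds W).biUnion fun e => Icc (e + 1) (e + K + 1)) := by
    refine (disjoint_biUnion_right _ _ _).2 fun e he => disjoint_left.2 fun w hw => ?_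
    exact notMem_Icc_of_mem_runEnds hW hE he hw
  have hle : ∀ e ∈ runEnds W, ∀ e' ∈ runEnds W, ∀ p ∈ Icc (e + 1) (e + K + 1),
      p ∈ Icc (e' + 1) (e' + K + 1) → e' ≤ e := by
    intro e he e' he' p hp hp'
    by_contra! hlt
    rw [mem_Icc] at hp hp'
    exact notMem_Icc_of_mem_runEnds hW hE he (mem_filter.1 he').1 (mem_Icc.2 ⟨by omega, by omega⟩)
  have hpair : (runEnds W : Set ℕ).PairwiseDisjoint fun e => Icc (e + 1) (e + K + 1) := by
    intro e he e' he' hne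
    refine disjoint_left.2 fun p hp hp' => hne (le_antisymm ?_ ?_)
    · exact hle e' he' e he p hp' hp
    · exact hle e he e' he' p hp hp'
  rw [forcedSet, card_union_of_disjoint hdisj, card_biUnion hpair]
  simp only [Nat.card_Icc, show ∀ e, e + K + 1 + 1 - (e + 1) = K + 1 by omega, sum_const,
    smul_eq_mul]

lemma apply_eq_true_iff_of_mem_forcedSet {p : ℕ} (hp : p ∈ forcedSet K W) :
    x p = true ↔ ∃ w ∈ W, w ≤ p ∧ p ≤ w + K := by
  refine ⟨fun hxp => ?_, fun ⟨w, hw, hwp, hpw⟩ => (hW w hw).apply_eq_true hwp hpw⟩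
  rcases mem_union.1 hp with hp | hp
  · exact ⟨p, hp, le_rfl, by omega⟩
  · obtain ⟨e, he, hpe⟩ := mem_biUnion.1 hp
    rw [mem_Icc] at hpe
    rcases (show p ≤ e + K ∨ p = e + K + 1 by omega) with hpK | rfl
    · exact ⟨e, (mem_filter.1 he).1, by omega, hpK⟩
    · rw [hE e he] at hxp
      exact absurd hxp Bool.false_ne_true

end ForcedSet

section Rotation

variable {N : ℕ}

def rotate (σ : Fin N → Bool) (c : ℕ) : Fin N → Bool := fun k => ext σ (c + k)

lemma ext_periodic (σ : Fin N → Bool) : Periodic (ext σ) N := by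
  intro i
  simp only [_root_.ext, Nat.add_mod_right]

lemma ext_of_lt (σ : Fin N → Bool) {i : ℕ} (h : i < N) : ext σ i = σ ⟨i, h⟩ := by
  simp [_root_.ext, Nat.ne_zero_of_lt h, Nat.mod_eq_of_lt h]

lemma ext_rotate (σ : Fin N → Bool) (c : ℕ) : ext (rotate σ c) = fun i => ext σ (c + i) := by
  funext i
  rcases N.eq_zero_or_pos with rfl | hN
  · simp [_root_.ext]
  · rw [← (ext_periodic _).map_mod_nat, ext_of_lt _ (Nat.mod_lt i hN), rotate,
      ← (ext_periodic σ).map_mod_nat, Nat.add_mod_mod, (ext_periodic σ).map_mod_nat]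

lemma rotate_injective (c : ℕ) : Injective fun σ : Fin N → Bool => rotate σ c := by
  intro σ τ h
  funext k
  obtain ⟨M, rfl⟩ : ∃ M, N = M + 1 := ⟨N - 1, by have := k.pos; omega⟩
  have hk : ∀ ρ : Fin (M + 1) → Bool, ρ k = ext (rotate ρ c) (M * c + k) := fun ρ => by
    rw [ext_rotate]
    dsimp only
    rw [show c + (M * c + k) = k + c * (M + 1) by ring,
      show ext ρ (k + c * (M + 1)) = ext ρ k by simpa using (ext_periodic ρ).nat_mul c k,
      ext_of_lt ρ k.isLt]
  simp only at h
  rw [hk σ, hk τ, h]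

lemma card_windows_rotate (K : ℕ) (σ : Fin N → Bool) (c : ℕ) :
    #(windows N K (ext (rotate σ c))) = #(windows N K (ext σ)) := by
  simp only [card_windows_eq_count, ext_rotate, isWindow_comp_add,
    Nat.count_comp_add_of_periodic (isWindow_periodic (ext_periodic σ))]

end Rotation

-- Site `0` starts a run of windows and site `N - 1` is `0`, so no window wraps around.
def anchored (N K l : ℕ) : Finset (Fin N → Bool) :=
  {τ | #(windows N K (ext τ)) = l ∧ IsWindow K (ext τ) 0 ∧ ext τ (N - 1) = false}

lemma mem_anchored {N K l : ℕ} {τ : Fin N → Bool} : τ ∈ anchored N K l ↔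
    #(windows N K (ext τ)) = l ∧ IsWindow K (ext τ) 0 ∧ ext τ (N - 1) = false := by
  simp [anchored]

lemma rotate_mem_anchored {N K l : ℕ} {σ : Fin N → Bool}
    (hσ : #(windows N K (ext σ)) = l) {i : ℕ}
    (hi : ¬ IsWindow K (ext σ) i) (hi' : IsWindow K (ext σ) (i + 1)) :
    rotate σ (i + 1) ∈ anchored N K l := by
  refine mem_anchored.2 ⟨(card_windows_rotate K σ _).trans hσ, ?_, ?_⟩
  · rw [ext_rotate, isWindow_comp_add]
    exact hi'
  · rcases N.eq_zero_or_pos with rfl | hN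
    · simp [_root_.ext]
    · rw [ext_rotate]
      dsimp only
      rw [show i + 1 + (N - 1) = i + N by omega, ext_periodic σ]
      exact eq_false_of_not_isWindow_of_isWindow_succ hi hi'

lemma card_le_mul_card_anchored {N K l : ℕ} (hl : 0 < l) (hlN : l < N) :
    (Finset.univ.filter fun σ : Fin N → Bool =>
        matchCount N K (ext σ) (fun _ => true) = l).card ≤ N * #(anchored N K l) := by
  have hboundary : ∀ σ : Fin N → Bool, #(windows N K (ext σ)) = l →
      ∃ i < N, ¬ IsWindow K (ext σ) i ∧ IsWindow K (ext σ) (i + 1) := by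
    intro σ hσ
    rw [card_windows_eq_count] at hσ
    obtain ⟨a, -, ha⟩ := Nat.count_ne_iff_exists.1 (by omega : Nat.count (IsWindow K (ext σ)) N ≠ 0)
    obtain ⟨b, -, hb⟩ : ∃ b < N, ¬ IsWindow K (ext σ) b := by
      by_contra! h
      exact absurd (Nat.count_of_forall h) (by omega)
    exact exists_lt_not_and_succ_of_periodic (isWindow_periodic (ext_periodic σ)) (by omega) ha hb
  choose! c hc using hboundary
  calc _ ≤ #(range N ×ˢ anchored N K l) := ?_
    _ = N * #(anchored N K l) := by rw [card_product, card_range]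
  refine card_le_card_of_injOn (fun σ => (c σ, rotate σ (c σ + 1))) (fun σ hσ => ?_) ?_
  · have hσ : #(windows N K (ext σ)) = l :=
      (matchCount_eq_card_windows N K _).symm.trans (mem_filter.1 hσ).2
    obtain ⟨hcN, hnot, hwin⟩ := hc σ hσ
    exact mem_product.2 ⟨mem_range.2 hcN, rotate_mem_anchored hσ hnot hwin⟩
  · intro σ _ τ _ h
    obtain ⟨hc, hrot⟩ := Prod.mk.inj h
    rw [hc] at hrot
    exact rotate_injective _ hrot

section Anchored

variable {N K : ℕ} {x : ℕ → Bool} (hx : x (N - 1) = false)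
include hx

lemma add_lt_of_mem_windows {w : ℕ} (hw : w ∈ windows N K x) : w + K + 1 < N := by
  obtain ⟨hwN, hwin⟩ := mem_filter.1 hw
  rw [mem_range] at hwN
  by_contra!
  have := hwin.apply_eq_true (p := N - 1) (by omega) (by omega)
  rw [hx] at this
  exact Bool.false_ne_true this

lemma apply_eq_false_of_mem_runEnds_windows {e : ℕ} (he : e ∈ runEnds (windows N K x)) :
    x (e + K + 1) = false := by
  obtain ⟨heW, hne⟩ := mem_filter.1 he
  refine eq_false_of_isWindow_of_not_isWindow_succ (isWindow_of_mem_windows heW) fun hwin => hne ?_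
  exact mem_filter.2 ⟨mem_range.2 (by have := add_lt_of_mem_windows hx heW; omega), hwin⟩

lemma lt_of_mem_forcedSet_windows {p : ℕ} (hp : p ∈ forcedSet K (windows N K x)) : p < N := by
  rcases mem_union.1 hp with hp | hp
  · exact mem_range.1 (mem_filter.1 hp).1
  · obtain ⟨e, he, hpe⟩ := mem_biUnion.1 hp
    have := add_lt_of_mem_windows hx (mem_filter.1 he).1
    rw [mem_Icc] at hpe
    omega

end Anchored

lemma card_fiber_mul_two_pow_le {N K l : ℕ} (W : Finset ℕ) :
    #{τ ∈ anchored N K l | windows N K (ext τ) = W} * 2 ^ (l + #(runEnds W) * (K + 1)) ≤ 2 ^ N := by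
  set fiber := {τ ∈ anchored N K l | windows N K (ext τ) = W}
  have hmem : ∀ τ ∈ fiber, ext τ (N - 1) = false ∧ #W = l ∧ windows N K (ext τ) = W := by
    intro τ hτ
    obtain ⟨hτA, hWτ⟩ := mem_filter.1 hτ
    obtain ⟨hl, -, hx⟩ := mem_anchored.1 hτA
    exact ⟨hx, hWτ ▸ hl, hWτ⟩
  rcases fiber.eq_empty_or_nonempty with hempty | ⟨τ₀, hτ₀⟩
  · simp [fiber, hempty]
  obtain ⟨hx₀, hl, rfl⟩ := hmem τ₀ hτ₀
  have hforced : ∀ τ ∈ fiber, ∀ p ∈ forcedSet K (windows N K (ext τ₀)),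
      (ext τ p = true ↔ ∃ w ∈ windows N K (ext τ₀), w ≤ p ∧ p ≤ w + K) := by
    intro τ hτ p hp
    obtain ⟨hx, -, hWτ⟩ := hmem τ hτ
    rw [← hWτ] at hp ⊢
    exact apply_eq_true_iff_of_mem_forcedSet (fun _ => isWindow_of_mem_windows)
      (fun e he => apply_eq_false_of_mem_runEnds_windows hx he) hp
  have hG : ∀ p ∈ forcedSet K (windows N K (ext τ₀)), p < N :=
    fun _ => lt_of_mem_forcedSet_windows hx₀
  have h := card_mul_card_pow_card_le_of_eqOn (s := fiber) (G := (forcedSet K _).attachFin hG)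
    fun σ hσ τ hτ k hk => by
      have hk := (mem_attachFin hG).1 hk
      rw [← ext_of_lt σ k.isLt, ← ext_of_lt τ k.isLt]
      exact Bool.eq_iff_iff.2 ((hforced σ hσ k hk).trans (hforced τ hτ k hk).symm)
  rwa [card_attachFin, card_forcedSet (fun _ => isWindow_of_mem_windows)
    (fun e he => apply_eq_false_of_mem_runEnds_windows hx₀ he), hl, Fintype.card_bool,
    Fintype.card_fin] at h

lemma card_anchored_le {N K l : ℕ} (hN : N ^ 2 ≤ 2 ^ K) :
    (#(anchored N K l) : ℝ) ≤ 2 ^ N / 2 ^ (K + l) := by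
  set 𝒲 := (anchored N K l).image fun τ => windows N K (ext τ)
  set r : ℝ := (2 ^ (K + 1))⁻¹
  have h𝒲 : ∀ W ∈ 𝒲, W ⊆ range N ∧ 0 ∈ W ∧ #W = l := by
    intro W hW
    obtain ⟨τ, hτ, rfl⟩ := mem_image.1 hW
    obtain ⟨hl, h0, hx⟩ := mem_anchored.1 hτ
    have hN : 0 < N := Nat.pos_of_ne_zero fun hN0 => by
      have := h0.apply_eq_true le_rfl (Nat.zero_le _)
      simp [_root_.ext, hN0] at this
    exact ⟨filter_subset _ _, mem_filter.2 ⟨mem_range.2 hN, h0⟩, hl⟩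
  have hfiber : ∀ W ∈ 𝒲, (#{τ ∈ anchored N K l | windows N K (ext τ) = W} : ℝ) ≤
      2 ^ N / 2 ^ (K + l + 1) * r ^ #(innerEnds W) := by
    intro W hW
    have h := card_fiber_mul_two_pow_le (N := N) (K := K) (l := l) W
    rw [card_runEnds_eq_card_innerEnds_add_one ⟨0, (h𝒲 W hW).2.1⟩] at h
    calc (#{τ ∈ anchored N K l | windows N K (ext τ) = W} : ℝ)
        ≤ 2 ^ N / 2 ^ (l + (#(innerEnds W) + 1) * (K + 1)) := by
          rw [le_div_iff₀ (by positivity)]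
          exact_mod_cast h
      _ = 2 ^ N / 2 ^ (K + l + 1) * r ^ #(innerEnds W) := by
          rw [inv_pow, ← div_eq_mul_inv, div_div, ← pow_mul, ← pow_add]
          ring_nf
  have hNr : (N : ℝ) ^ 2 * r ≤ 1 / 2 := by
    rw [← div_eq_mul_inv, div_le_iff₀ (by positivity), pow_succ (2 : ℝ) K]
    have : (N : ℝ) ^ 2 ≤ 2 ^ K := by exact_mod_cast hN
    linarith
  calc (#(anchored N K l) : ℝ)
      = ∑ W ∈ 𝒲, (#{τ ∈ anchored N K l | windows N K (ext τ) = W} : ℝ) := by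
        rw [card_eq_sum_card_image (fun τ => windows N K (ext τ))]
        push_cast
        rfl
    _ ≤ ∑ W ∈ 𝒲, 2 ^ N / 2 ^ (K + l + 1) * r ^ #(innerEnds W) := sum_le_sum hfiber
    _ = 2 ^ N / 2 ^ (K + l + 1) * ∑ W ∈ 𝒲, r ^ #(innerEnds W) := (mul_sum _ _ _).symm
    _ ≤ 2 ^ N / 2 ^ (K + l + 1) * 2 := by
        gcongr
        exact sum_pow_card_innerEnds_le h𝒲 (by positivity) hNr
    _ = 2 ^ N / 2 ^ (K + l) := by
        rw [pow_succ]
        field_simp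

theorem stmt_1_general (N K l : ℕ)
    (hbig : (N : ℝ) ^ 2 * 2 ^ (-(K : ℝ)) ≤ 1 / 2)
    (hl1 : 1 ≤ l) (hl2 : l ≤ N - K - 1) :
    (Finset.univ.filter fun σ : Fin N → Bool =>
        matchCount N K (ext σ) (fun _ => true) = l).card
      ≤ N * 2 ^ (N - (K + l)) := by
  have hKl : K + l ≤ N := by omega
  have hN : N ^ 2 ≤ 2 ^ K := by
    rw [Real.rpow_neg zero_le_two, Real.rpow_natCast, ← div_eq_mul_inv,
      div_le_iff₀ (by positivity)] at hbig
    have h2K : (0 : ℝ) < 2 ^ K := by positivity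
    exact_mod_cast (by linarith : (N : ℝ) ^ 2 ≤ 2 ^ K)
  have hanchored : #(anchored N K l) ≤ 2 ^ (N - (K + l)) := by
    have h := card_anchored_le (l := l) hN
    rw [div_eq_mul_inv, ← pow_sub₀ (2 : ℝ) two_ne_zero hKl] at h
    exact_mod_cast h
  exact (card_le_mul_card_anchored hl1 (by omega)).trans (Nat.mul_le_mul_left N hanchored)

/-- If `N²·2^{−K} ≤ 1/2` and `1 ≤ l ≤ N−K−1`, then the number of configurations
`σ ∈ {−1,+1}^N` with `N·Q(σ) = l` is at most `N·2^{N−(K+l)}`. -/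
theorem stmt_1 (N K l : ℕ) (hK : 1 ≤ K) (hNK : K < N)
    (hbig : (N : ℝ) ^ 2 * 2 ^ (-(K : ℝ)) ≤ 1 / 2)
    (hl1 : 1 ≤ l) (hl2 : l ≤ N - K - 1) :
    (Finset.univ.filter fun σ : Fin N → Bool =>
        matchCount N K (ext σ) (fun _ => true) = l).card
      ≤ N * 2 ^ (N - (K + l)) :=
  stmt_1_general N K l hbig hl1 hl2
end

section
/- Define f_s(t) = (α+t)·ln 2 − t·s²/(1+t) for t ∈ [0, 1−α]. If 2−√2 < α ≤ 1, then for every s with 0 < s < √(2 ln 2), we have min_{t ∈ [0,1−α]} f_s(t) > 0. -/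
/-- For `2−√2 < α ≤ 1` and any `0 < s < √(2 ln 2)`, the function
`f_s(t) = (α+t)·ln 2 − t·s²/(1+t)` is strictly positive on `[0, 1−α]`
(equivalently, its minimum over the compact interval is positive). -/
theorem stmt_4 (α : ℝ) (hα1 : 2 - Real.sqrt 2 < α) (hα2 : α ≤ 1)
    (s : ℝ) (hs1 : 0 < s) (hs2 : s < Real.sqrt (2 * Real.log 2)) :
    ∀ t ∈ Set.Icc (0 : ℝ) (1 - α),
      0 < (α + t) * Real.log 2 - t * s ^ 2 / (1 + t) := by
  intro t ht
  obtain ⟨ht0, ht1⟩ := ht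
  have hL : 0 < Real.log 2 := Real.log_pos (by norm_num)
  have hs2' : s ^ 2 < 2 * Real.log 2 := by
    have := (Real.lt_sqrt hs1.le).mp hs2
    linarith
  have hsq : Real.sqrt 2 ^ 2 = 2 := Real.sq_sqrt (by norm_num)
  have hsqlt : Real.sqrt 2 < 3 / 2 := by
    nlinarith [Real.sqrt_nonneg 2]
  have hα : 3 - 2 * Real.sqrt 2 < α := by nlinarith [Real.sqrt_nonneg 2]
  have h1t : (0:ℝ) < 1 + t := by linarith
  rw [sub_pos, div_lt_iff₀ h1t]
  have hkey : 2 * t < (α + t) * (1 + t) := by nlinarith [Real.sqrt_nonneg 2]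
  nlinarith [mul_nonneg ht0 (sq_nonneg s)]
end

section
/- Define f_s(t) = (α+t)·ln 2 − t·s²/(1+t) for t ∈ [0, 1−α]. If 0 < α < 3−2√2, then for every s with 0 < s < √(ln 2)·(1+√α), we have min_{t ∈ [0,1−α]} f_s(t) > 0. Moreover, √(ln 2)·(1+√α) < √(2 ln 2). -/
/-- For `0 < α < 3−2√2` and any `0 < s < √(ln 2)·(1+√α)`, the function
`f_s(t) = (α+t)·ln 2 − t·s²/(1+t)` is strictly positive on `[0, 1−α]`;
moreover `√(ln 2)·(1+√α) < √(2 ln 2)`. -/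
theorem stmt_6 (α : ℝ) (hα1 : 0 < α) (hα2 : α < 3 - 2 * Real.sqrt 2)
    (s : ℝ) (hs1 : 0 < s) (hs2 : s < Real.sqrt (Real.log 2) * (1 + Real.sqrt α)) :
    (∀ t ∈ Set.Icc (0 : ℝ) (1 - α),
      0 < (α + t) * Real.log 2 - t * s ^ 2 / (1 + t))
    ∧ Real.sqrt (Real.log 2) * (1 + Real.sqrt α) < Real.sqrt (2 * Real.log 2) := by
  have hL : 0 < Real.log 2 := Real.log_pos (by norm_num)
  have hsa : 0 ≤ Real.sqrt α := Real.sqrt_nonneg α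
  have hsa2 : Real.sqrt α ^ 2 = α := Real.sq_sqrt hα1.le
  have hsL : Real.sqrt (Real.log 2) ^ 2 = Real.log 2 := Real.sq_sqrt hL.le
  have hs2' : s ^ 2 < Real.log 2 * (1 + Real.sqrt α) ^ 2 := by
    have h := mul_self_lt_mul_self hs1.le hs2
    nlinarith [h]
  have h2 : Real.sqrt 2 ^ 2 = 2 := Real.sq_sqrt (by norm_num)
  have h2' : 1 < Real.sqrt 2 := by nlinarith [Real.sqrt_nonneg 2]
  constructor
  · intro t ht
    obtain ⟨ht0, ht1⟩ := ht
    have h1t : 0 < 1 + t := by linarith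
    rw [sub_pos, div_lt_iff₀ h1t]
    rcases eq_or_lt_of_le ht0 with h | h
    · subst h; nlinarith
    · have key : t * (1 + Real.sqrt α) ^ 2 ≤ (α + t) * (1 + t) := by
        nlinarith [sq_nonneg (Real.sqrt α - t)]
      have : t * s ^ 2 < t * (Real.log 2 * (1 + Real.sqrt α) ^ 2) :=
        mul_lt_mul_of_pos_left hs2' h
      nlinarith
  · have hsqrt : Real.sqrt α < Real.sqrt 2 - 1 := by
      have : α < (Real.sqrt 2 - 1) ^ 2 := by nlinarith
      nlinarith [hsa2]
    have h2L : Real.sqrt (2 * Real.log 2) = Real.sqrt 2 * Real.sqrt (Real.log 2) :=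
      Real.sqrt_mul (by norm_num) _
    rw [h2L]
    have hLpos : 0 < Real.sqrt (Real.log 2) := Real.sqrt_pos.mpr hL
    nlinarith
end

section
/- For each even integer p ≥ 2, define β_p > 0 by β_p² = inf_{0<u<1} (1+u^{−p})·I(u), where I(u) = ((1+u)ln(1+u)+(1−u)ln(1−u))/2. Then lim_{p→∞} β_p² = 2 ln 2, i.e., β_p → β_c = √(2 ln 2). -/
/-!
Since `I' = artanh ≥ id` on `[0, 1)`, `I(u) ≥ u²/2` and `I` is increasing. Fix `u₀ ∈ (0, 1)`.
For `u < u₀` the objective `(1 + u⁻ᵖ) I(u)` is at least `u^{2-p}/2 ≥ u₀^{2-p}/2`, which tends to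
infinity with `p`; for `u ≥ u₀` it is at least `2 I(u₀)`. Hence `liminf β_p² ≥ 2 I(u₀)`, and
`I(u₀) → I(1) = ln 2` as `u₀ → 1`. Conversely, letting `u → 1` in the objective gives
`β_p² ≤ 2 ln 2` for every `p`.
-/

open Filter

/-- `I(u) = ((1+u)·ln(1+u) + (1−u)·ln(1−u))/2`. -/
noncomputable def entI (u : ℝ) : ℝ :=
  ((1 + u) * Real.log (1 + u) + (1 - u) * Real.log (1 - u)) / 2

/-- `β_p² = inf_{0<u<1} (1+u^{−p})·I(u)`. -/
noncomputable def betaPsq (p : ℕ) : ℝ :=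
  sInf ((fun u : ℝ => (1 + (u ^ p)⁻¹) * entI u) '' Set.Ioo 0 1)

open Set Topology

lemma two_mul_le_log_one_add_sub_log_one_sub {u : ℝ} (h₀ : 0 ≤ u) (h₁ : u < 1) :
    2 * u ≤ Real.log (1 + u) - Real.log (1 - u) := by
  have hs := Real.hasSum_log_sub_log_of_abs_lt_one (abs_lt.2 ⟨by linarith, h₁⟩)
  simpa using le_hasSum hs 0 fun k _ => by positivity

@[fun_prop]
lemma continuous_entI : Continuous entI := by
  have := Real.continuous_mul_log
  unfold entI
  fun_prop

lemma entI_one : entI 1 = Real.log 2 := by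
  norm_num [entI]

lemma hasDerivAt_entI {u : ℝ} (h₀ : -1 < u) (h₁ : u < 1) :
    HasDerivAt entI ((Real.log (1 + u) - Real.log (1 - u)) / 2) u := by
  have hplus := (Real.hasDerivAt_mul_log (x := 1 + u) (by linarith)).comp u
    ((hasDerivAt_id u).const_add 1)
  have hminus := (Real.hasDerivAt_mul_log (x := 1 - u) (by linarith)).comp u
    ((hasDerivAt_id u).const_sub 1)
  exact ((hplus.add hminus).div_const 2).congr_deriv (by ring)

lemma monotoneOn_entI_sub_sq_div_two :
    MonotoneOn (fun u => entI u - u ^ 2 / 2) (Icc 0 1) := by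
  refine monotoneOn_of_hasDerivWithinAt_nonneg
    (f' := fun u => (Real.log (1 + u) - Real.log (1 - u)) / 2 - u) (convex_Icc 0 1)
    (by fun_prop) (fun u hu => ?_) fun u hu => ?_
  · rw [interior_Icc] at hu
    exact (((hasDerivAt_entI (by linarith [hu.1]) hu.2).fun_sub
      ((hasDerivAt_pow 2 u).div_const 2)).congr_deriv (by ring)).hasDerivWithinAt
  · rw [interior_Icc] at hu
    have := two_mul_le_log_one_add_sub_log_one_sub hu.1.le hu.2
    linarith

lemma sq_div_two_le_entI {u : ℝ} (hu : u ∈ Icc 0 1) : u ^ 2 / 2 ≤ entI u := by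
  have := monotoneOn_entI_sub_sq_div_two (left_mem_Icc.2 zero_le_one) hu hu.1
  norm_num [entI] at this ⊢
  linarith

lemma monotoneOn_entI : MonotoneOn entI (Icc 0 1) := by
  have hsq : MonotoneOn (fun u : ℝ => u ^ 2 / 2) (Icc 0 1) := fun a ha b _ hab => by
    have := pow_le_pow_left₀ ha.1 hab 2
    linarith
  simpa using monotoneOn_entI_sub_sq_div_two.add hsq

lemma betaPsq_le_of_mem (p : ℕ) {u : ℝ} (hu : u ∈ Ioo 0 1) :
    betaPsq p ≤ (1 + (u ^ p)⁻¹) * entI u := by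
  refine csInf_le ⟨0, ?_⟩ (mem_image_of_mem _ hu)
  rintro _ ⟨v, hv, rfl⟩
  have := sq_div_two_le_entI (Ioo_subset_Icc_self hv)
  exact mul_nonneg (by have := hv.1; positivity) (by nlinarith)

lemma le_betaPsq {p : ℕ} {b : ℝ} (h : ∀ u ∈ Ioo (0 : ℝ) 1, b ≤ (1 + (u ^ p)⁻¹) * entI u) :
    b ≤ betaPsq p :=
  le_csInf (Nonempty.image _ (nonempty_Ioo.2 zero_lt_one)) (forall_mem_image.2 h)

lemma betaPsq_le_two_mul_log_two (p : ℕ) : betaPsq p ≤ 2 * Real.log 2 := by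
  have hlim : Tendsto (fun u : ℝ => (1 + (u ^ p)⁻¹) * entI u) (𝓝[<] 1)
      (𝓝 (2 * Real.log 2)) := by
    have : ContinuousAt (fun u : ℝ => (1 + (u ^ p)⁻¹) * entI u) 1 := by
      fun_prop (disch := norm_num)
    simpa [entI_one, one_add_one_eq_two] using this.tendsto.mono_left nhdsWithin_le_nhds
  refine ge_of_tendsto hlim ?_
  filter_upwards [Ioo_mem_nhdsLT zero_lt_one] with u hu using betaPsq_le_of_mem p hu

lemma min_le_betaPsq {p : ℕ} (hp : 2 ≤ p) {u₀ : ℝ} (hu₀ : u₀ ∈ Ioo 0 1) :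
    min ((u₀ ^ (p - 2))⁻¹ / 2) (2 * entI u₀) ≤ betaPsq p := by
  refine le_betaPsq fun u hu => ?_
  have hup : 0 < u ^ p := pow_pos hu.1 p
  have hI := sq_div_two_le_entI (Ioo_subset_Icc_self hu)
  rcases lt_or_ge u u₀ with hlt | hge
  · calc min ((u₀ ^ (p - 2))⁻¹ / 2) (2 * entI u₀) ≤ (u₀ ^ (p - 2))⁻¹ / 2 := min_le_left _ _
      _ ≤ (u ^ (p - 2))⁻¹ / 2 := by
        gcongr
        exacts [pow_pos hu.1 _, hu.1.le]
      _ = (u ^ p)⁻¹ * (u ^ 2 / 2) := by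
        rw [← Nat.sub_add_cancel hp, pow_add, Nat.add_sub_cancel]
        field_simp [hu.1.ne']
      _ ≤ (u ^ p)⁻¹ * entI u := by gcongr
      _ ≤ (1 + (u ^ p)⁻¹) * entI u := by
        gcongr
        · linarith [sq_nonneg u]
        · linarith
  · have hI₀ := sq_div_two_le_entI (Ioo_subset_Icc_self hu₀)
    have hmono := monotoneOn_entI (Ioo_subset_Icc_self hu₀) (Ioo_subset_Icc_self hu) hge
    have hinv : 1 ≤ (u ^ p)⁻¹ := one_le_inv₀ hup |>.2 (pow_le_one₀ hu.1.le hu.2.le)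
    calc min ((u₀ ^ (p - 2))⁻¹ / 2) (2 * entI u₀) ≤ 2 * entI u₀ := min_le_right _ _
      _ ≤ (1 + (u ^ p)⁻¹) * entI u := by
        gcongr
        · linarith [sq_nonneg u₀]
        · linarith

lemma exists_lt_two_mul_entI {a : ℝ} (ha : a < 2 * Real.log 2) :
    ∃ u₀ ∈ Ioo (0 : ℝ) 1, a < 2 * entI u₀ := by
  have hlim : Tendsto (fun u => 2 * entI u) (𝓝[<] 1) (𝓝 (2 * Real.log 2)) := by
    rw [← entI_one]
    exact ((continuous_entI.const_mul 2).tendsto 1).mono_left nhdsWithin_le_nhds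
  exact ((hlim.eventually_const_lt ha).and (Ioo_mem_nhdsLT zero_lt_one)).exists.imp
    fun u h => ⟨h.2, h.1⟩

lemma tendsto_inv_pow_sub_two_div_two {u₀ : ℝ} (hu₀ : u₀ ∈ Ioo 0 1) :
    Tendsto (fun p : ℕ => (u₀ ^ (p - 2))⁻¹ / 2) atTop atTop := by
  simp only [← inv_pow]
  exact ((tendsto_pow_atTop_atTop_of_one_lt ((one_lt_inv₀ hu₀.1).2 hu₀.2)).comp
    (tendsto_sub_atTop_nat 2)).atTop_div_const two_pos

/-- As `p → ∞` along even `p ≥ 2`, `β_p² → 2 ln 2`, i.e. `β_p → β_c = √(2 ln 2)`. -/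
theorem stmt_11 :
    Tendsto betaPsq (atTop ⊓ Filter.principal {p : ℕ | Even p ∧ 2 ≤ p})
      (nhds (2 * Real.log 2)) := by
  refine tendsto_order.2 ⟨fun a ha => ?_, fun a ha => Eventually.of_forall fun p =>
    (betaPsq_le_two_mul_log_two p).trans_lt ha⟩
  obtain ⟨u₀, hu₀, hau₀⟩ := exists_lt_two_mul_entI ha
  rw [eventually_inf_principal]
  filter_upwards [(tendsto_inv_pow_sub_two_div_two hu₀).eventually_gt_atTop a] with p hp hpeven
  exact (lt_min hp hau₀).trans_le (min_le_betaPsq hpeven.2 hu₀)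
end
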